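/- There exists a constant C > 0 such that for all t > 0 and all w ∈ ℝ, | (1/√(4πt)) Σ_{n=0}^∞ exp(−(w+n)²/(4t)) − erf(w/√t) | ≤ C/√t. -/

import Mathlib

/-!
The substitution `x = y / √t` turns `erf (w / √t)` into `(4πt)^{-1/2} ∫_w^∞ g` with
`g y = exp (-y² / (4t))`, so it suffices to bound `|∑ₙ g (w + n) - ∫_w^∞ g|` uniformly in `t`.
Comparing `g (w + n)` with the mean of `g` over `(w + n, w + n + 1]` bounds this error by the total
variation `∫ |g'|`, and every Gaussian `exp (-b y²)` has total variation `2`: it rises from `0` to `1`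
and falls back. Hence `C = 2 / √(4π) ≤ 1` works.
-/

open MeasureTheory

/-- `erf u := (4π)^{-1/2} ∫_u^∞ exp(−x²/4) dx`. -/
noncomputable def erf (u : ℝ) : ℝ :=
  (Real.sqrt (4 * Real.pi))⁻¹ * ∫ x in Set.Ioi u, Real.exp (-(x ^ 2) / 4)

open Set Real Function

theorem iUnion_Ioc_add_natCast {α : Type*} [CommRing α] [LinearOrder α] [IsStrictOrderedRing α]
    [Archimedean α] (a : α) : ⋃ n : ℕ, Ioc (a + n) (a + n + 1) = Ioi a := by
  ext x
  simp only [mem_iUnion, mem_Ioc, mem_Ioi]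
  constructor
  · rintro ⟨n, hn, -⟩
    linarith [(Nat.cast_nonneg n : (0 : α) ≤ n)]
  · intro hx
    obtain ⟨n, hn₁, hn₂⟩ := mem_iUnion.1 ((iUnion_Ioc_add_intCast a).symm ▸ mem_univ x)
    have : (-1 : α) < n := by linarith
    lift n to ℕ using by exact_mod_cast this
    exact ⟨n, by exact_mod_cast hn₁, by exact_mod_cast hn₂⟩

theorem pairwise_disjoint_Ioc_add_natCast {α : Type*} [Ring α] [PartialOrder α]
    [IsOrderedRing α] (a : α) : Pairwise (Disjoint on fun n : ℕ => Ioc (a + n) (a + n + 1)) := by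
  intro m n hmn
  simpa only [onFun, Int.cast_natCast] using
    pairwise_disjoint_Ioc_add_intCast a (Nat.cast_injective.ne hmn : (m : ℤ) ≠ n)

section RiemannSum

variable {f f' : ℝ → ℝ}

theorem abs_sub_setIntegral_Ioc_le {a : ℝ} (hf : ∀ x ∈ Icc a (a + 1), HasDerivAt f (f' x) x)
    (hf' : IntegrableOn f' (Ioc a (a + 1))) :
    |f a - ∫ x in Ioc a (a + 1), f x| ≤ ∫ x in Ioc a (a + 1), |f' x| := by
  have hfi : IntegrableOn f (Ioc a (a + 1)) :=
    (ContinuousOn.integrableOn_Icc fun x hx => (hf x hx).continuousAt.continuousWithinAt).mono_set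
      Ioc_subset_Icc_self
  have hvol : volume.real (Ioc a (a + 1)) = 1 := by simp
  have hosc : ∀ x ∈ Ioc a (a + 1), ‖f a - f x‖ ≤ ∫ y in Ioc a (a + 1), |f' y| := by
    intro x hx
    have hsub : Icc a x ⊆ Icc a (a + 1) := Icc_subset_Icc_right hx.2
    calc ‖f a - f x‖ = |∫ y in a..x, f' y| := by
          rw [intervalIntegral.integral_eq_sub_of_hasDerivAt
            (fun y hy => hf y (hsub (uIcc_of_le hx.1.le ▸ hy)))
            ((intervalIntegrable_iff_integrableOn_Ioc_of_le hx.1.le).2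
              (hf'.mono_set (Ioc_subset_Ioc_right hx.2))),
            Real.norm_eq_abs, abs_sub_comm]
      _ ≤ ∫ y in Ioc a x, |f' y| := by
          rw [intervalIntegral.integral_of_le hx.1.le]
          exact abs_integral_le_integral_abs
      _ ≤ ∫ y in Ioc a (a + 1), |f' y| :=
          setIntegral_mono_set hf'.abs (.of_forall fun _ => abs_nonneg _)
            (Ioc_subset_Ioc_right hx.2).eventuallyLE
  have hfin : volume (Ioc a (a + 1)) < ⊤ := measure_Ioc_lt_top
  have := norm_setIntegral_le_of_norm_le_const hfin hosc
  rwa [integral_sub (integrableOn_const (C := f a) hfin.ne) hfi, setIntegral_const, hvol,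
    one_smul, mul_one] at this

theorem abs_tsum_sub_integral_Ioi_le {w : ℝ} (hf : ∀ x ∈ Ici w, HasDerivAt f (f' x) x)
    (hfi : IntegrableOn f (Ioi w)) (hf'i : IntegrableOn f' (Ioi w)) :
    |∑' n : ℕ, f (w + n) - ∫ x in Ioi w, f x| ≤ ∫ x in Ioi w, |f' x| := by
  set I : ℕ → Set ℝ := fun n => Ioc (w + n) (w + n + 1)
  have hI : ∀ n, I n ⊆ Ioi w := fun n => iUnion_Ioc_add_natCast w ▸ subset_iUnion I n
  have hasSum_integral : ∀ {g : ℝ → ℝ}, IntegrableOn g (Ioi w) →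
      HasSum (fun n => ∫ x in I n, g x) (∫ x in Ioi w, g x) := fun hg => by
    simpa only [I, iUnion_Ioc_add_natCast] using hasSum_integral_iUnion
      (fun _ => measurableSet_Ioc) (pairwise_disjoint_Ioc_add_natCast w)
      (iUnion_Ioc_add_natCast w ▸ hg)
  have hlocal : ∀ n : ℕ, ‖f (w + n) - ∫ x in I n, f x‖ ≤ ∫ x in I n, |f' x| := fun n =>
    abs_sub_setIntegral_Ioc_le
      (fun x hx => hf x (by simp only [mem_Ici]; linarith [hx.1, n.cast_nonneg (α := ℝ)]))
      (hf'i.mono_set (hI n))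
  have hsum : Summable fun n : ℕ => f (w + n) - ∫ x in I n, f x :=
    .of_norm_bounded (hasSum_integral hf'i.abs).summable hlocal
  have hsplit : ∑' n : ℕ, f (w + n) - ∫ x in Ioi w, f x
      = ∑' n : ℕ, (f (w + n) - ∫ x in I n, f x) := by
    have := hsum.hasSum.add (hasSum_integral hfi)
    simp only [sub_add_cancel] at this
    rw [this.tsum_eq, add_sub_cancel_right]
  rw [hsplit]
  exact tsum_of_norm_bounded (hasSum_integral hf'i.abs) hlocal

end RiemannSum

theorem hasDerivAt_exp_neg_mul_sq (b x : ℝ) :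
    HasDerivAt (fun x => exp (-b * x ^ 2)) (-2 * b * (x * exp (-b * x ^ 2))) x := by
  convert ((hasDerivAt_pow 2 x).const_mul (-b)).exp using 1
  ring

section Gaussian

variable {b : ℝ}

theorem integral_Ioi_mul_exp_neg_mul_sq (hb : 0 < b) :
    ∫ x in Ioi 0, x * exp (-b * x ^ 2) = (2 * b)⁻¹ := by
  have := integral_mul_cexp_neg_mul_sq (b := b) (by simpa using hb)
  simp only [← Complex.ofReal_pow, ← Complex.ofReal_mul, ← Complex.ofReal_neg,
    ← Complex.ofReal_exp, integral_complex_ofReal] at this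
  exact_mod_cast this

theorem integral_abs_mul_exp_neg_mul_sq (hb : 0 < b) :
    ∫ x, |x| * exp (-b * x ^ 2) = b⁻¹ := by
  have := integral_comp_abs (f := fun x => x * exp (-b * x ^ 2))
  simp only [sq_abs] at this
  rw [this, integral_Ioi_mul_exp_neg_mul_sq hb]
  field_simp

theorem abs_tsum_exp_neg_mul_sq_sub_integral_le (hb : 0 < b) (w : ℝ) :
    |∑' n : ℕ, exp (-b * (w + n) ^ 2) - ∫ x in Ioi w, exp (-b * x ^ 2)| ≤ 2 := by
  have hderiv := (integrable_mul_exp_neg_mul_sq hb).const_mul (-2 * b)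
  calc _ ≤ ∫ x in Ioi w, |-2 * b * (x * exp (-b * x ^ 2))| :=
        abs_tsum_sub_integral_Ioi_le (fun x _ => hasDerivAt_exp_neg_mul_sq b x)
          (integrable_exp_neg_mul_sq hb).integrableOn hderiv.integrableOn
    _ ≤ ∫ x, |-2 * b * (x * exp (-b * x ^ 2))| :=
        setIntegral_le_integral hderiv.abs (.of_forall fun _ => abs_nonneg _)
    _ = 2 := by
        simp only [abs_mul, abs_of_pos (exp_pos _), abs_neg, abs_two, abs_of_pos hb]
        simp only [mul_assoc, integral_const_mul, integral_abs_mul_exp_neg_mul_sq hb]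
        field_simp

end Gaussian

theorem erf_div_sqrt {t : ℝ} (ht : 0 < t) (w : ℝ) :
    erf (w / √t) = (√(4 * π * t))⁻¹ * ∫ x in Ioi w, exp (-(4 * t)⁻¹ * x ^ 2) := by
  have hst : 0 < √t := sqrt_pos.2 ht
  have hscale := integral_comp_mul_left_Ioi (fun x => exp (-(x ^ 2) / 4)) w (inv_pos.2 hst)
  have hexp : ∀ x, exp (-((√t)⁻¹ * x) ^ 2 / 4) = exp (-(4 * t)⁻¹ * x ^ 2) := fun x => by
    rw [mul_pow, inv_pow, sq_sqrt ht.le]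
    ring_nf
  simp only [hexp, inv_inv, smul_eq_mul] at hscale
  rw [erf, show w / √t = (√t)⁻¹ * w from (inv_mul_eq_div _ _).symm, hscale,
    sqrt_mul (by positivity) t, mul_inv]
  field_simp

/-- The Riemann-sum estimate: `(4πt)^{-1/2} ∑ₙ exp(−(w+n)²/(4t))` differs from
`erf(w/√t)` by at most `C/√t`, uniformly in `w ∈ ℝ` and `t > 0`. -/
theorem riemann_sum_erf_estimate :
    ∃ C : ℝ, 0 < C ∧ ∀ t : ℝ, 0 < t → ∀ w : ℝ,
      |(Real.sqrt (4 * Real.pi * t))⁻¹ * (∑' n : ℕ, Real.exp (-(w + n) ^ 2 / (4 * t)))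
        - erf (w / Real.sqrt t)| ≤ C / Real.sqrt t := by
  refine ⟨1, one_pos, fun t ht w => ?_⟩
  have hsum : ∑' n : ℕ, exp (-(w + n) ^ 2 / (4 * t)) = ∑' n : ℕ, exp (-(4 * t)⁻¹ * (w + n) ^ 2) :=
    tsum_congr fun n => by ring_nf
  have htwo : 2 ≤ √(4 * π) := le_sqrt_of_sq_le (by nlinarith [pi_gt_three])
  rw [hsum, erf_div_sqrt ht, ← mul_sub, abs_mul, abs_of_pos (by positivity)]
  calc _ ≤ (√(4 * π * t))⁻¹ * 2 := by
        gcongr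
        exact abs_tsum_exp_neg_mul_sq_sub_integral_le (by positivity) w
    _ = 2 / √(4 * π) / √t := by
        rw [sqrt_mul (by positivity)]
        field_simp
    _ ≤ 1 / √t := by
        gcongr
        exact (div_le_one (by positivity)).2 htwo
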